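/- arXiv:1606.08420 — 5 statements merged into one kernel-verified Lean document; each statement's English description precedes it below -/
import Mathlib

section
/- The pretentious distance satisfies the triangle inequality: for all multiplicative functions f, g, h with values in the closed unit disc and all N ∈ ℕ, D(f, g; N) ≤ D(f, h; N) + D(h, g; N), where D(f,g;N)² = Σ_{p prime, p ≤ N} (1 - Re(f(p)·conj(g(p))))/p. -/
/-!
Since `2 (1 - Re (u v̄)) = ‖u - v‖² + (1 - ‖u‖²) + (1 - ‖v‖²)`, on the unit disc the quantity
`√(2 (1 - Re (u v̄)))` is the Euclidean length of `(‖u - v‖, √(1 - ‖u‖²), √(1 - ‖v‖²))`.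
Minkowski's inequality in `ℝ³`, with `‖u - v‖ ≤ ‖u - w‖ + ‖w - v‖` in the first coordinate, gives
the triangle inequality for `√(1 - Re (u v̄))`; Minkowski's inequality over the primes `p ≤ N`
then adds up these pointwise inequalities, weighted by `1 / p`.
-/

open Finset Complex
open scoped ComplexConjugate

namespace Real

theorem sqrt_sum_le_sqrt_sum_add_sqrt_sum {ι : Type*} (s : Finset ι) {x y z : ι → ℝ}
    (hx : ∀ i, 0 ≤ x i) (hy : ∀ i, 0 ≤ y i) (hz : ∀ i ∈ s, √(z i) ≤ √(x i) + √(y i)) :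
    √(∑ i ∈ s, z i) ≤ √(∑ i ∈ s, x i) + √(∑ i ∈ s, y i) := by
  have hX : 0 ≤ ∑ i ∈ s, x i := sum_nonneg fun i _ => hx i
  have hY : 0 ≤ ∑ i ∈ s, y i := sum_nonneg fun i _ => hy i
  refine sqrt_le_iff.2 ⟨by positivity, ?_⟩
  calc ∑ i ∈ s, z i ≤ ∑ i ∈ s, (√(x i) + √(y i)) ^ 2 :=
        sum_le_sum fun i hi => (sqrt_le_iff.1 (hz i hi)).2
    _ = ∑ i ∈ s, x i + ∑ i ∈ s, y i + 2 * ∑ i ∈ s, √(x i) * √(y i) := by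
        simp only [add_sq, sq_sqrt (hx _), sq_sqrt (hy _), mul_assoc, sum_add_distrib, ← mul_sum]
        ring
    _ ≤ ∑ i ∈ s, x i + ∑ i ∈ s, y i + 2 * (√(∑ i ∈ s, x i) * √(∑ i ∈ s, y i)) := by
        gcongr; exact sum_sqrt_mul_sqrt_le s hx hy
    _ = (√(∑ i ∈ s, x i) + √(∑ i ∈ s, y i)) ^ 2 := by
        rw [add_sq, sq_sqrt hX, sq_sqrt hY]; ring

theorem sqrt_div_le_sqrt_div_add_sqrt_div {a b c t : ℝ} (ht : 0 ≤ t) (h : √a ≤ √b + √c) :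
    √(a / t) ≤ √(b / t) + √(c / t) := by
  rw [sqrt_div' a ht, sqrt_div' b ht, sqrt_div' c ht, ← add_div]
  exact div_le_div_of_nonneg_right h (sqrt_nonneg t)

end Real

namespace Complex

theorem one_sub_re_mul_conj_eq (u v : ℂ) :
    1 - (u * conj v).re = (‖u - v‖ ^ 2 + (1 - ‖u‖ ^ 2) + (1 - ‖v‖ ^ 2)) / 2 := by
  simp only [Complex.sq_norm, normSq_sub]
  ring

theorem one_sub_re_mul_conj_nonneg {u v : ℂ} (hu : ‖u‖ ≤ 1) (hv : ‖v‖ ≤ 1) :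
    0 ≤ 1 - (u * conj v).re := by
  rw [one_sub_re_mul_conj_eq]
  have hu' : ‖u‖ ^ 2 ≤ 1 := pow_le_one₀ (norm_nonneg u) hu
  have hv' : ‖v‖ ^ 2 ≤ 1 := pow_le_one₀ (norm_nonneg v) hv
  positivity

theorem sqrt_one_sub_re_mul_conj_le {u v w : ℂ} (hu : ‖u‖ ≤ 1) (hv : ‖v‖ ≤ 1) (hw : ‖w‖ ≤ 1) :
    √(1 - (u * conj v).re) ≤ √(1 - (u * conj w).re) + √(1 - (w * conj v).re) := by
  rw [one_sub_re_mul_conj_eq u v, one_sub_re_mul_conj_eq u w, one_sub_re_mul_conj_eq w v]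
  refine Real.sqrt_div_le_sqrt_div_add_sqrt_div zero_le_two ?_
  have hu' : 0 ≤ 1 - ‖u‖ ^ 2 := sub_nonneg.2 (pow_le_one₀ (norm_nonneg u) hu)
  have hv' : 0 ≤ 1 - ‖v‖ ^ 2 := sub_nonneg.2 (pow_le_one₀ (norm_nonneg v) hv)
  have hw' : 0 ≤ 1 - ‖w‖ ^ 2 := sub_nonneg.2 (pow_le_one₀ (norm_nonneg w) hw)
  have key := Real.sqrt_sum_le_sqrt_sum_add_sqrt_sum (univ : Finset (Fin 3))
    (x := ![‖u - w‖ ^ 2, 1 - ‖u‖ ^ 2, 1 - ‖w‖ ^ 2])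
    (y := ![‖w - v‖ ^ 2, 1 - ‖w‖ ^ 2, 1 - ‖v‖ ^ 2])
    (z := ![‖u - v‖ ^ 2, 1 - ‖u‖ ^ 2, 1 - ‖v‖ ^ 2])
    (by intro i; fin_cases i <;> simp [hu', hw'])
    (by intro i; fin_cases i <;> simp [hv', hw'])
    (by
      intro i _
      fin_cases i
      · simpa [Real.sqrt_sq (norm_nonneg _)] using norm_sub_le_norm_sub_add_norm_sub u w v
      · exact le_add_of_nonneg_right (Real.sqrt_nonneg _)
      · exact le_add_of_nonneg_left (Real.sqrt_nonneg _))
  simpa [Fin.sum_univ_three, add_assoc] using key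

end Complex

theorem stmt2_general (f g h : ℕ → ℂ)
    (hfb : ∀ n, ‖f n‖ ≤ 1)
    (hgb : ∀ n, ‖g n‖ ≤ 1)
    (hhb : ∀ n, ‖h n‖ ≤ 1)
    (N : ℕ)
    (D : (ℕ → ℂ) → (ℕ → ℂ) → ℝ)
    (hD : ∀ u v : ℕ → ℂ, D u v =
      Real.sqrt (∑ p ∈ (Finset.range (N + 1)).filter Nat.Prime,
        (1 - (u p * (starRingEnd ℂ) (v p)).re) / p)) :
    D f g ≤ D f h + D h g := by
  rw [hD f g, hD f h, hD h g]
  refine Real.sqrt_sum_le_sqrt_sum_add_sqrt_sum _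
    (fun p => div_nonneg (one_sub_re_mul_conj_nonneg (hfb p) (hhb p)) p.cast_nonneg)
    (fun p => div_nonneg (one_sub_re_mul_conj_nonneg (hhb p) (hgb p)) p.cast_nonneg)
    fun p _ => Real.sqrt_div_le_sqrt_div_add_sqrt_div p.cast_nonneg
      (sqrt_one_sub_re_mul_conj_le (hfb p) (hgb p) (hhb p))

theorem stmt2 (f g h : ℕ → ℂ)
    (hfm : ∀ m n : ℕ, Nat.Coprime m n → f (m * n) = f m * f n)
    (hgm : ∀ m n : ℕ, Nat.Coprime m n → g (m * n) = g m * g n)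
    (hhm : ∀ m n : ℕ, Nat.Coprime m n → h (m * n) = h m * h n)
    (hfb : ∀ n, ‖f n‖ ≤ 1)
    (hgb : ∀ n, ‖g n‖ ≤ 1)
    (hhb : ∀ n, ‖h n‖ ≤ 1)
    (N : ℕ)
    (D : (ℕ → ℂ) → (ℕ → ℂ) → ℝ)
    (hD : ∀ u v : ℕ → ℂ, D u v =
      Real.sqrt (∑ p ∈ (Finset.range (N + 1)).filter Nat.Prime,
        (1 - (u p * (starRingEnd ℂ) (v p)).re) / p)) :
    D f g ≤ D f h + D h g :=
  stmt2_general f g h hfb hgb hhb N D hD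
end

section
/- The pretentious distance is subadditive under pointwise products: for all multiplicative functions f₁, f₂, g₁, g₂ with values in the closed unit disc and all N ∈ ℕ, D(f₁f₂, g₁g₂; N) ≤ D(f₁, g₁; N) + D(f₂, g₂; N). -/
open Finset Complex

/-! For `‖z‖ ≤ 1` put `δ z = √(1 - Re z)`. Since `(Im z)² ≤ 2 (1 - Re z)`, the map `δ` is
subadditive on products: `δ (z w) ≤ δ z + δ w`. As `f₁f₂ · conj (g₁g₂) = (f₁ conj g₁)(f₂ conj g₂)`,
the distance `D` is the weighted `ℓ²` norm of `p ↦ δ (f p · conj (g p))`, and Minkowski's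
inequality finishes the proof. -/

namespace Real

variable {ι : Type*}

theorem sqrt_sum_add_sq_le (s : Finset ι) (x y : ι → ℝ) :
    √(∑ i ∈ s, (x i + y i) ^ 2) ≤ √(∑ i ∈ s, x i ^ 2) + √(∑ i ∈ s, y i ^ 2) := by
  have hX : 0 ≤ ∑ i ∈ s, x i ^ 2 := sum_nonneg fun i _ => sq_nonneg (x i)
  have hY : 0 ≤ ∑ i ∈ s, y i ^ 2 := sum_nonneg fun i _ => sq_nonneg (y i)
  rw [sqrt_le_left (by positivity), add_sq, sq_sqrt hX, sq_sqrt hY]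
  have hCS := sum_mul_le_sqrt_mul_sqrt s x y
  simp only [add_sq, sum_add_distrib, mul_assoc, ← mul_sum]
  nlinarith

theorem sqrt_sum_le_sqrt_sum_add_sqrt_sum_s3 (s : Finset ι) {a b c : ι → ℝ}
    (hb : ∀ i ∈ s, 0 ≤ b i) (hc : ∀ i ∈ s, 0 ≤ c i)
    (h : ∀ i ∈ s, a i ≤ (√(b i) + √(c i)) ^ 2) :
    √(∑ i ∈ s, a i) ≤ √(∑ i ∈ s, b i) + √(∑ i ∈ s, c i) :=
  calc √(∑ i ∈ s, a i) ≤ √(∑ i ∈ s, (√(b i) + √(c i)) ^ 2) := sqrt_le_sqrt (sum_le_sum h)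
    _ ≤ √(∑ i ∈ s, √(b i) ^ 2) + √(∑ i ∈ s, √(c i) ^ 2) := sqrt_sum_add_sq_le s _ _
    _ = √(∑ i ∈ s, b i) + √(∑ i ∈ s, c i) := by
      rw [sum_congr rfl fun i hi => sq_sqrt (hb i hi), sum_congr rfl fun i hi => sq_sqrt (hc i hi)]

theorem le_sq_sqrt_div_add_sqrt_div {x y z : ℝ} (hy : 0 ≤ y) (hz : 0 ≤ z)
    (h : x ≤ (√y + √z) ^ 2) {t : ℝ} (ht : 0 ≤ t) : x / t ≤ (√(y / t) + √(z / t)) ^ 2 := by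
  rw [sqrt_div hy, sqrt_div hz, ← add_div, div_pow, sq_sqrt ht]
  exact div_le_div_of_nonneg_right h ht

end Real

namespace Complex

theorem one_sub_re_nonneg {z : ℂ} (hz : ‖z‖ ≤ 1) : 0 ≤ 1 - z.re := by
  linarith [re_le_norm z]

theorem im_sq_le_two_mul_one_sub_re {z : ℂ} (hz : ‖z‖ ≤ 1) : z.im ^ 2 ≤ 2 * (1 - z.re) := by
  have h := Complex.sq_norm z
  rw [normSq_apply] at h
  nlinarith [norm_nonneg z, re_le_norm z]

theorem one_sub_re_mul_le {z w : ℂ} (hz : ‖z‖ ≤ 1) (hw : ‖w‖ ≤ 1) :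
    1 - (z * w).re ≤ (√(1 - z.re) + √(1 - w.re)) ^ 2 := by
  have hz₀ := one_sub_re_nonneg hz
  have hw₀ := one_sub_re_nonneg hw
  have him : |z.im * w.im| ≤ 2 * (√(1 - z.re) * √(1 - w.re)) := by
    refine abs_le_of_sq_le_sq ?_ (by positivity)
    rw [mul_pow, mul_pow, mul_pow, Real.sq_sqrt hz₀, Real.sq_sqrt hw₀]
    nlinarith [im_sq_le_two_mul_one_sub_re hz, im_sq_le_two_mul_one_sub_re hw, sq_nonneg z.im]
  rw [add_sq, Real.sq_sqrt hz₀, Real.sq_sqrt hw₀, mul_re]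
  nlinarith [le_abs_self (z.im * w.im), mul_nonneg hz₀ hw₀]

theorem norm_mul_conj_le_one {z w : ℂ} (hz : ‖z‖ ≤ 1) (hw : ‖w‖ ≤ 1) :
    ‖z * starRingEnd ℂ w‖ ≤ 1 := by
  rw [norm_mul, norm_conj]
  exact mul_le_one₀ hz (norm_nonneg w) hw

end Complex

theorem stmt3_general (f₁ f₂ g₁ g₂ : ℕ → ℂ)
    (hbf₁ : ∀ n, ‖f₁ n‖ ≤ 1) (hbf₂ : ∀ n, ‖f₂ n‖ ≤ 1)
    (hbg₁ : ∀ n, ‖g₁ n‖ ≤ 1) (hbg₂ : ∀ n, ‖g₂ n‖ ≤ 1)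
    (N : ℕ)
    (D : (ℕ → ℂ) → (ℕ → ℂ) → ℝ)
    (hD : ∀ u v : ℕ → ℂ, D u v =
      Real.sqrt (∑ p ∈ (Finset.range (N + 1)).filter Nat.Prime,
        (1 - (u p * (starRingEnd ℂ) (v p)).re) / p)) :
    D (fun n => f₁ n * f₂ n) (fun n => g₁ n * g₂ n) ≤ D f₁ g₁ + D f₂ g₂ := by
  have h₁ (p : ℕ) := norm_mul_conj_le_one (hbf₁ p) (hbg₁ p)
  have h₂ (p : ℕ) := norm_mul_conj_le_one (hbf₂ p) (hbg₂ p)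
  rw [hD, hD, hD]
  refine Real.sqrt_sum_le_sqrt_sum_add_sqrt_sum_s3 _
    (fun p _ => div_nonneg (one_sub_re_nonneg (h₁ p)) p.cast_nonneg)
    (fun p _ => div_nonneg (one_sub_re_nonneg (h₂ p)) p.cast_nonneg) fun p _ => ?_
  have hprod : f₁ p * f₂ p * starRingEnd ℂ (g₁ p * g₂ p) =
      f₁ p * starRingEnd ℂ (g₁ p) * (f₂ p * starRingEnd ℂ (g₂ p)) := by
    rw [map_mul]; ring
  rw [hprod]
  exact Real.le_sq_sqrt_div_add_sqrt_div (one_sub_re_nonneg (h₁ p)) (one_sub_re_nonneg (h₂ p))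
    (one_sub_re_mul_le (h₁ p) (h₂ p)) p.cast_nonneg

theorem stmt3 (f₁ f₂ g₁ g₂ : ℕ → ℂ)
    (hf₁ : ∀ m n : ℕ, Nat.Coprime m n → f₁ (m * n) = f₁ m * f₁ n)
    (hf₂ : ∀ m n : ℕ, Nat.Coprime m n → f₂ (m * n) = f₂ m * f₂ n)
    (hg₁ : ∀ m n : ℕ, Nat.Coprime m n → g₁ (m * n) = g₁ m * g₁ n)
    (hg₂ : ∀ m n : ℕ, Nat.Coprime m n → g₂ (m * n) = g₂ m * g₂ n)
    (hbf₁ : ∀ n, ‖f₁ n‖ ≤ 1) (hbf₂ : ∀ n, ‖f₂ n‖ ≤ 1)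
    (hbg₁ : ∀ n, ‖g₁ n‖ ≤ 1) (hbg₂ : ∀ n, ‖g₂ n‖ ≤ 1)
    (N : ℕ)
    (D : (ℕ → ℂ) → (ℕ → ℂ) → ℝ)
    (hD : ∀ u v : ℕ → ℂ, D u v =
      Real.sqrt (∑ p ∈ (Finset.range (N + 1)).filter Nat.Prime,
        (1 - (u p * (starRingEnd ℂ) (v p)).re) / p)) :
    D (fun n => f₁ n * f₂ n) (fun n => g₁ n * g₂ n) ≤ D f₁ g₁ + D f₂ g₂ :=
  stmt3_general f₁ f₂ g₁ g₂ hbf₁ hbf₂ hbg₁ hbg₂ N D hD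
end

section
/- Let d ≥ 2 and let f : ℕ → ℂ be a multiplicative function such that f(p) is a non-trivial d-th root of unity for all but finitely many primes p. Then for every Dirichlet character χ of modulus m, D(f, χ)² = Σ_{p prime} (1 - Re(f(p) conj(χ(p))))/p = ∞. -/
open Finset Filter Complex

open ArithmeticFunction vonMangoldt LSeries in
lemma aux_not_summable (q : ℕ) [NeZero q] :
    ¬ Summable (fun n : ℕ ↦ if n.Prime ∧ (n : ZMod q) = 1 then ((n : ℝ))⁻¹ else 0) := by
  intro hsum
  set g : ℕ → ℝ := fun n ↦ if n.Prime ∧ (n : ZMod q) = 1 then ((n : ℝ))⁻¹ else 0 with hg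
  have hcond : ∀ {n : ℕ}, n.Prime ∧ (n : ZMod q) = 1 → (1 : ℝ) ≤ n := fun {n} h ↦ by
    exact_mod_cast h.1.one_lt.le
  set gs : ℝ → ℕ → ℝ := fun s n ↦ if n.Prime ∧ (n : ZMod q) = 1 then (n : ℝ) ^ (-s) else 0
    with hgs
  have hgs_le : ∀ s : ℝ, 1 ≤ s → ∀ n, gs s n ≤ g n := by
    intro s hs n
    simp only [hgs, hg]
    split_ifs with h
    · rw [← Real.rpow_neg_one (n : ℝ)]
      exact Real.rpow_le_rpow_of_exponent_le (hcond h) (by linarith)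
    · exact le_refl 0
  have hgs_nonneg : ∀ s n, 0 ≤ gs s n := fun s n ↦ by
    simp only [hgs]; split_ifs with h
    · positivity
    · exact le_refl 0
  have hgs_sum : ∀ s : ℝ, 1 ≤ s → Summable (gs s) := fun s hs ↦
    hsum.of_nonneg_of_le (hgs_nonneg s) (hgs_le s hs)
  have hgs_tsum : ∀ s : ℝ, 1 ≤ s → ∑' n, gs s n ≤ ∑' n, g n := fun s hs ↦
    Summable.tsum_le_tsum (hgs_le s hs) (hgs_sum s hs) hsum
  -- summability of the residue class L-series for s > 1
  have hR : ∀ {s : ℝ}, 1 < s → Summable (fun n ↦ residueClass (1 : ZMod q) n / (n : ℝ) ^ s) :=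
    fun {s} hs ↦ summable_real_of_abscissaOfAbsConv_lt <|
      (abscissaOfAbsConv_residueClass_le_one 1).trans_lt <| mod_cast hs
  set ps : ℝ → ℕ → ℝ :=
    fun s n ↦ (if n.Prime then residueClass (1 : ZMod q) n else 0) / (n : ℝ) ^ s with hps
  have hrc_nonneg := residueClass_nonneg (1 : ZMod q)
  have hps_nonneg : ∀ s n, 0 ≤ ps s n := fun s n ↦ by
    simp only [hps]
    have := hrc_nonneg n
    split_ifs with h
    · positivity
    · simp
  have hps_le : ∀ s n, ps s n ≤ residueClass (1 : ZMod q) n / (n : ℝ) ^ s := fun s n ↦ by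
    simp only [hps]
    split_ifs with h
    · exact le_refl _
    · rw [zero_div]
      have := hrc_nonneg n
      positivity
  have hps_sum : ∀ {s : ℝ}, 1 < s → Summable (ps s) := fun {s} hs ↦
    (hR hs).of_nonneg_of_le (hps_nonneg s) (hps_le s)
  -- non-prime part
  set nps : ℝ → ℕ → ℝ :=
    fun s n ↦ (if n.Prime then 0 else residueClass (1 : ZMod q) n) / (n : ℝ) ^ s with hnps
  have hnps1 : Summable (fun n ↦ (if n.Prime then 0 else residueClass (1 : ZMod q) n) / (n : ℕ)) :=
    summable_residueClass_non_primes_div (1 : ZMod q)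
  have hnps_le : ∀ s : ℝ, 1 ≤ s → ∀ n : ℕ,
      nps s n ≤ (if n.Prime then 0 else residueClass (1 : ZMod q) n) / (n : ℕ) := by
    intro s hs n
    rcases Nat.eq_zero_or_pos n with rfl | hn
    · simp [hnps]
    · have h1 : (1 : ℝ) ≤ (n : ℝ) := by exact_mod_cast hn
      have hle : (n : ℝ) ≤ (n : ℝ) ^ s := by
        nth_rewrite 1 [← Real.rpow_one (n : ℝ)]
        exact Real.rpow_le_rpow_of_exponent_le h1 hs
      have hnum : 0 ≤ (if n.Prime then 0 else residueClass (1 : ZMod q) n) := by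
        split_ifs; · exact le_refl 0
        · exact hrc_nonneg n
      exact div_le_div_of_nonneg_left hnum (by exact_mod_cast hn) hle |>.trans_eq (by norm_num)
  have hnps_nonneg : ∀ s n, 0 ≤ nps s n := fun s n ↦ by
    simp only [hnps]
    have := hrc_nonneg n
    split_ifs with h
    · simp
    · positivity
  have hnps_sum : ∀ s : ℝ, 1 ≤ s → Summable (nps s) := fun s hs ↦
    hnps1.of_nonneg_of_le (hnps_nonneg s) (hnps_le s hs)
  have hnps_tsum : ∀ s : ℝ, 1 ≤ s → ∑' n, nps s n ≤ ∑' n, nps 1 n := by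
    intro s hs
    have h1 : ∀ n : ℕ, nps 1 n =
        (if n.Prime then 0 else residueClass (1 : ZMod q) n) / (n : ℕ) := by
      intro n; simp only [hnps, Real.rpow_one]
    refine (Summable.tsum_le_tsum (fun n ↦ (hnps_le s hs n).trans_eq (h1 n).symm)
      (hnps_sum s hs) ?_)
    exact (hnps_sum 1 le_rfl)
  -- splitting
  have hsplit : ∀ {s : ℝ}, 1 < s →
      ∑' n, residueClass (1 : ZMod q) n / (n : ℝ) ^ s = (∑' n, ps s n) + ∑' n, nps s n := by
    intro s hs
    rw [← Summable.tsum_add (hps_sum hs) (hnps_sum s hs.le)]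
    refine tsum_congr fun n ↦ ?_
    simp only [hps, hnps]
    split_ifs with h <;> ring
  -- lower bound for the prime part
  obtain ⟨C₀, hC₀⟩ := LSeries_residueClass_lower_bound (q := q) (a := 1) isUnit_one
  set B : ℝ := C₀ + ∑' n, nps 1 n with hB
  have hP_lb : ∀ {s : ℝ}, s ∈ Set.Ioc 1 2 →
      (q.totient : ℝ)⁻¹ / (s - 1) - B ≤ ∑' n, ps s n := by
    intro s hs
    have := hC₀ hs
    rw [hsplit hs.1] at this
    have h2 := hnps_tsum s hs.1.le
    simp only [hB]
    linarith
  -- key step inequality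
  have step : ∀ s' s : ℝ, 1 < s' → s' ≤ s →
      ∑' n, gs s n + (s - s') * ∑' n, ps s n ≤ ∑' n, gs s' n := by
    intro s' s hs' hss
    have hs1 : 1 < s := hs'.trans_le hss
    rw [← tsum_mul_left, ← Summable.tsum_add (hgs_sum s hs1.le) ((hps_sum hs1).mul_left _)]
    refine Summable.tsum_le_tsum (fun n ↦ ?_) ((hgs_sum s hs1.le).add ((hps_sum hs1).mul_left _))
      (hgs_sum s' hs'.le)
    by_cases h : n.Prime ∧ (n : ZMod q) = 1
    · have hn1 : (1 : ℝ) ≤ n := hcond h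
      have hn0 : (0 : ℝ) < n := lt_of_lt_of_le zero_lt_one hn1
      have hrc : residueClass (1 : ZMod q) n = Real.log n := by
        rw [residueClass, Set.indicator_of_mem (by exact h.2), vonMangoldt_apply_prime h.1]
      simp only [hgs, hps, if_pos h, if_pos h.1, hrc]
      have hlog : 0 ≤ Real.log n := Real.log_nonneg hn1
      have e1 : (n : ℝ) ^ (-s') = (n : ℝ) ^ (-s) * (n : ℝ) ^ (s - s') := by
        rw [← Real.rpow_add hn0]; ring_nf
      have e2 : (n : ℝ) ^ (s - s') = Real.exp ((s - s') * Real.log n) := by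
        rw [Real.rpow_def_of_pos hn0]; ring_nf
      have e3 : 1 + (s - s') * Real.log n ≤ Real.exp ((s - s') * Real.log n) := by
        have := Real.add_one_le_exp ((s - s') * Real.log (n : ℝ)); linarith
      have e4 : Real.log n / (n : ℝ) ^ s = Real.log n * (n : ℝ) ^ (-s) := by
        rw [Real.rpow_neg hn0.le, div_eq_mul_inv]
      have hpow : (0 : ℝ) < (n : ℝ) ^ (-s) := Real.rpow_pos_of_pos hn0 _
      rw [e1, e2, e4]
      nlinarith [mul_le_mul_of_nonneg_left e3 hpow.le]
    · have hps0 : (if n.Prime then residueClass (1 : ZMod q) n else 0) = 0 := by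
        split_ifs with hp
        · rw [residueClass, Set.indicator_of_notMem]
          intro hmem
          exact h ⟨hp, hmem⟩
        · rfl
      simp only [hgs, hps, if_neg h, hps0, zero_div, mul_zero, add_zero, le_refl]
  -- the exponent sequence 1 + 2⁻ᵏ
  set e : ℕ → ℝ := fun k ↦ 1 + (1 / 2 : ℝ) ^ k with he
  have he_mem : ∀ k, e k ∈ Set.Ioc (1 : ℝ) 2 := by
    intro k
    have h1 : (0 : ℝ) < (1/2 : ℝ)^k := by positivity
    have h2 : (1/2 : ℝ)^k ≤ 1 := pow_le_one₀ (by norm_num) (by norm_num)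
    exact ⟨by simp only [he]; linarith, by simp only [he]; linarith⟩
  set t : ℝ := (q.totient : ℝ)⁻¹ with ht
  have ht0 : 0 < t := inv_pos.mpr (mod_cast q.totient.pos_of_neZero)
  have hstep2 : ∀ k : ℕ,
      ∑' n, gs (e k) n + (t / 2 - B * (1 / 2) ^ (k + 1)) ≤ ∑' n, gs (e (k + 1)) n := by
    intro k
    have hc : (0 : ℝ) < (1/2 : ℝ)^k := by positivity
    have h1 : e (k + 1) ≤ e k := by
      simp only [he]
      have : (1/2 : ℝ)^(k+1) ≤ (1/2)^k := by rw [pow_succ]; nlinarith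
      linarith
    have hP := hP_lb (he_mem k)
    have hstep := step (e (k + 1)) (e k) (he_mem (k + 1)).1 h1
    have hd : e k - e (k + 1) = (1/2 : ℝ)^(k+1) := by
      simp only [he]; rw [pow_succ]; ring
    have he1 : e k - 1 = (1/2 : ℝ)^k := by simp only [he]; ring
    rw [hd] at hstep
    rw [he1] at hP
    have hmul := mul_le_mul_of_nonneg_left hP
      (le_of_lt (by positivity : (0 : ℝ) < (1/2 : ℝ)^(k+1)))
    have heq : (1/2 : ℝ)^(k+1) * (t / (1/2 : ℝ)^k - B) = t / 2 - B * (1/2 : ℝ)^(k+1) := by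
      rw [pow_succ]
      field_simp
    rw [heq] at hmul
    calc ∑' n, gs (e k) n + (t / 2 - B * (1/2 : ℝ)^(k+1))
        ≤ ∑' n, gs (e k) n + (1/2 : ℝ)^(k+1) * ∑' n, ps (e k) n := by linarith
      _ ≤ ∑' n, gs (e (k + 1)) n := hstep
  have hind : ∀ K : ℕ,
      ∑' n, gs (e 0) n + K * (t / 2) - |B| * (1 - (1/2 : ℝ)^K) ≤ ∑' n, gs (e K) n := by
    intro K
    induction K with
    | zero => norm_num
    | succ K ih =>
      have h2 := hstep2 K
      have h3 : B * (1/2 : ℝ)^(K+1) ≤ |B| * (1/2 : ℝ)^(K+1) :=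
        mul_le_mul_of_nonneg_right (le_abs_self B) (by positivity)
      have h4 : (1/2 : ℝ)^(K+1) = (1/2 : ℝ)^K / 2 := by rw [pow_succ]; ring
      push_cast
      nlinarith [abs_nonneg B]
  clear_value B t g gs ps nps e
  have hG0 : 0 ≤ ∑' n, gs (e 0) n := tsum_nonneg (hgs_nonneg _)
  obtain ⟨K, hK⟩ := exists_nat_gt ((∑' n, g n + |B|) / (t / 2))
  have h6 := hind K
  have h7 := hgs_tsum (e K) (he_mem K).1.le
  have h5 : (K : ℝ) * (t / 2) ≤ ∑' n, g n + |B| := by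
    have hp : (1/2 : ℝ)^K ≤ 1 := pow_le_one₀ (by norm_num) (by norm_num)
    have hp0 : (0 : ℝ) ≤ (1/2 : ℝ)^K := by positivity
    calc (K : ℝ) * (t / 2)
        ≤ (∑' n, gs (e K) n) - (∑' n, gs (e 0) n) + |B| * (1 - (1/2 : ℝ)^K) := by
          linarith [h6]
      _ ≤ (∑' n, g n) + |B| := by nlinarith [mul_nonneg (abs_nonneg B) hp0, h7, hG0, hp]
  rw [div_lt_iff₀ (by positivity : (0 : ℝ) < t / 2)] at hK
  linarith

theorem stmt5 (d : ℕ) (hd : 2 ≤ d) (f : ℕ → ℂ)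
    (hfm : ∀ a b : ℕ, Nat.Coprime a b → f (a * b) = f a * f b)
    (hfb : ∀ n, ‖f n‖ ≤ 1)
    (hroot : ∃ S : Finset ℕ, ∀ p : ℕ, Nat.Prime p → p ∉ S →
      (f p) ^ d = 1 ∧ f p ≠ 1)
    (m : ℕ) [NeZero m] (χ : DirichletCharacter ℂ m) :
    Tendsto (fun N : ℕ =>
        ∑ p ∈ (Finset.range (N + 1)).filter Nat.Prime,
          (1 - (f p * (starRingEnd ℂ) (χ (p : ZMod m))).re) / p)
      atTop atTop := by
  classical
  obtain ⟨S, hS⟩ := hroot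
  have hd0 : 0 < d := by omega
  set T : Finset ℂ := (Polynomial.nthRootsFinset d (1 : ℂ)).erase 1 with hT
  have hT_pos : ∀ z ∈ T, 0 < 1 - z.re := by
    intro z hz
    obtain ⟨hz1, hzd⟩ := Finset.mem_erase.mp hz
    rw [Polynomial.mem_nthRootsFinset hd0 (1 : ℂ)] at hzd
    have habs : ‖z‖ = 1 := by
      have h := congrArg (‖·‖) hzd
      simp only [norm_pow, norm_one] at h
      rcases lt_trichotomy ‖z‖ 1 with hlt | heq | hgt
      · have := pow_lt_one₀ (norm_nonneg z) hlt hd0.ne'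
        linarith
      · exact heq
      · have := one_lt_pow₀ hgt hd0.ne'
        linarith
    have hre : z.re ≤ 1 := habs ▸ Complex.re_le_norm z
    rcases hre.lt_or_eq with h | h
    · linarith
    · exfalso
      apply hz1
      have hsq : z.re * z.re + z.im * z.im = 1 := by
        have h2 := Complex.sq_norm z
        rw [habs] at h2
        rw [Complex.normSq_apply] at h2
        linarith [h2.symm]
      have him : z.im = 0 := by nlinarith
      exact Complex.ext (by simpa using h) (by simpa using him)
  -- f p lands in T for primes outside S
  have hfT : ∀ p : ℕ, p.Prime → p ∉ S → f p ∈ T := by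
    intro p hp hpS
    obtain ⟨h1, h2⟩ := hS p hp hpS
    exact Finset.mem_erase.mpr ⟨h2, (Polynomial.mem_nthRootsFinset hd0 (1 : ℂ)).mpr h1⟩
  have hTne : T.Nonempty := by
    obtain ⟨p, hple, hp⟩ := Nat.exists_infinite_primes ((S.sup id) + 1)
    refine ⟨f p, hfT p hp fun hmem ↦ ?_⟩
    have h5 := Finset.le_sup (f := id) hmem
    simp only [id] at h5
    omega
  set ε : ℝ := T.inf' hTne (fun z ↦ 1 - z.re) with hε
  have hε0 : 0 < ε := (Finset.lt_inf'_iff hTne).mpr hT_pos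
  -- divergent minorant
  set g'' : ℕ → ℝ :=
    fun n ↦ if n.Prime ∧ (n : ZMod m) = 1 ∧ n ∉ S then ((n : ℝ))⁻¹ else 0 with hg''
  have hg''_nonneg : ∀ n, 0 ≤ g'' n := fun n ↦ by
    simp only [hg'']
    split_ifs
    · positivity
    · exact le_refl 0
  have hg''_not : ¬ Summable g'' := by
    intro h
    apply aux_not_summable m
    have hfin : Summable (fun n ↦
        if n ∈ S then (if n.Prime ∧ (n : ZMod m) = 1 then ((n : ℝ))⁻¹ else 0) else 0) :=
      summable_of_ne_finset_zero (s := S) (fun n hn ↦ if_neg hn)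
    refine (h.add hfin).congr fun n ↦ ?_
    simp only [hg'']
    by_cases hnS : n ∈ S
    · rw [if_pos hnS, if_neg (fun hc ↦ hc.2.2 hnS), zero_add]
    · rw [if_neg hnS, add_zero]
      by_cases h2 : n.Prime ∧ (n : ZMod m) = 1
      · rw [if_pos ⟨h2.1, h2.2, hnS⟩, if_pos h2]
      · rw [if_neg (fun hc ↦ h2 ⟨hc.1, hc.2.1⟩), if_neg h2]
  have htend : Tendsto (fun n ↦ ∑ i ∈ Finset.range n, g'' i) atTop atTop :=
    (not_summable_iff_tendsto_nat_atTop_of_nonneg hg''_nonneg).mp hg''_not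
  have h1 : Tendsto (fun N : ℕ ↦ ε * ∑ i ∈ Finset.range (N + 1), g'' i) atTop atTop := by
    have h2 : Tendsto (fun N : ℕ ↦ ∑ i ∈ Finset.range (N + 1), g'' i) atTop atTop :=
      htend.comp (tendsto_add_atTop_nat 1)
    exact h2.const_mul_atTop hε0
  refine tendsto_atTop_mono (fun N ↦ ?_) h1
  -- the comparison
  have hterm_nonneg : ∀ p : ℕ, p.Prime →
      0 ≤ (1 - (f p * (starRingEnd ℂ) (χ (p : ZMod m))).re) / p := by
    intro p hp
    have hp0 : (0 : ℝ) < p := by exact_mod_cast hp.pos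
    apply div_nonneg _ hp0.le
    have h2 : (f p * (starRingEnd ℂ) (χ (p : ZMod m))).re ≤ 1 := by
      refine (Complex.re_le_norm _).trans ?_
      rw [norm_mul]
      have h3 : ‖(starRingEnd ℂ) (χ (p : ZMod m))‖ = ‖χ (p : ZMod m)‖ :=
        Complex.norm_conj _
      have h4 : ‖χ (p : ZMod m)‖ ≤ 1 := by
        have := χ.norm_le_one (p : ZMod m)
        exact this
      calc ‖f p‖ * ‖(starRingEnd ℂ) (χ (p : ZMod m))‖
          ≤ 1 * 1 := by rw [h3]; exact mul_le_mul (hfb p) h4 (norm_nonneg _) zero_le_one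
        _ = 1 := by norm_num
    linarith
  calc ε * ∑ i ∈ Finset.range (N + 1), g'' i
      = ∑ i ∈ (Finset.range (N + 1)).filter
          (fun n : ℕ ↦ n.Prime ∧ ((n : ℕ) : ZMod m) = 1 ∧ n ∉ S), ε * (i : ℝ)⁻¹ := by
        rw [Finset.mul_sum, Finset.sum_filter]
        refine Finset.sum_congr rfl fun i _ ↦ ?_
        simp only [hg'']
        split_ifs <;> simp
    _ ≤ ∑ i ∈ (Finset.range (N + 1)).filter
          (fun n : ℕ ↦ n.Prime ∧ ((n : ℕ) : ZMod m) = 1 ∧ n ∉ S),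
          (1 - (f i * (starRingEnd ℂ) (χ (i : ZMod m))).re) / i := by
        refine Finset.sum_le_sum fun i hi ↦ ?_
        obtain ⟨hiP, hi1, hiS⟩ := (Finset.mem_filter.mp hi).2
        have hi0 : (0 : ℝ) < i := by exact_mod_cast hiP.pos
        have hχ : χ ((i : ZMod m)) = 1 := by rw [hi1, map_one]
        have hεle : ε ≤ 1 - (f i).re := Finset.inf'_le _ (hfT i hiP hiS)
        rw [hχ, map_one, mul_one]
        calc ε * (i : ℝ)⁻¹ = ε / i := by rw [div_eq_mul_inv]
          _ ≤ (1 - (f i).re) / i := by gcongr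
    _ ≤ ∑ p ∈ (Finset.range (N + 1)).filter Nat.Prime,
          (1 - (f p * (starRingEnd ℂ) (χ (p : ZMod m))).re) / p := by
        refine Finset.sum_le_sum_of_subset_of_nonneg ?_ fun i hi _ ↦
          hterm_nonneg i (Finset.mem_filter.mp hi).2
        exact Finset.monotone_filter_right _ (fun n _ hn ↦ hn.1)
end

section
/- (Wiener's theorem for measures) Let σ be a finite positive Borel measure on the circle 𝕋 = ℝ/ℤ with Fourier coefficients c(n) = ∫ e(nt) dσ(t). Then lim_{N→∞} (1/N) Σ_{n=1}^{N} |c(n)|² = Σ_{t ∈ 𝕋} σ({t})², and in particular σ has no atoms if and only if (1/N) Σ_{n=1}^{N} |c(n)|² → 0. -/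
/-!
Integrating `fourier n (x - y) = e(n x) · conj (e(n y))` against `σ ⊗ σ` gives `|c(n)|²`, so the
Cesàro mean of `|c(n)|²` is the `σ ⊗ σ`-integral of `N⁻¹ ∑_{n=1}^N e(n (x - y))`. These kernels are
bounded by `1` and, by the geometric sum, tend pointwise to the indicator of the diagonal
`x = y`. Dominated convergence turns the limit into the mass of the diagonal, which by Fubini is
`∫ σ {x} dσ(x) = ∑ₜ σ {t}²`.
-/

open Finset Filter MeasureTheory Complex

open scoped Topology ComplexConjugate

lemma norm_sum_Icc_pow_le {𝕜 : Type*} [RCLike 𝕜] {z : 𝕜} (hz : ‖z‖ ≤ 1) (hz1 : z ≠ 1)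
    (N : ℕ) : ‖∑ n ∈ Icc 1 N, z ^ n‖ ≤ 2 / ‖z - 1‖ := by
  rw [← Finset.Ico_add_one_right_eq_Icc, geom_sum_Ico hz1 (Nat.le_add_left 1 N), norm_div]
  gcongr
  calc ‖z ^ (N + 1) - z ^ 1‖ ≤ ‖z‖ ^ (N + 1) + ‖z‖ ^ 1 :=
        (norm_sub_le _ _).trans_eq (by rw [norm_pow, norm_pow])
    _ ≤ 1 + 1 := add_le_add (pow_le_one₀ (norm_nonneg z) hz) (pow_le_one₀ (norm_nonneg z) hz)
    _ = 2 := one_add_one_eq_two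

lemma tendsto_average_pow_zero {𝕜 : Type*} [RCLike 𝕜] {z : 𝕜} (hz : ‖z‖ ≤ 1) (hz1 : z ≠ 1) :
    Tendsto (fun N : ℕ => (N : 𝕜)⁻¹ * ∑ n ∈ Icc 1 N, z ^ n) atTop (𝓝 0) := by
  have hinv : Tendsto (fun N : ℕ => (N : ℝ)⁻¹ * (2 / ‖z - 1‖)) atTop (𝓝 0) := by
    simpa using (tendsto_inv_atTop_zero.comp (tendsto_natCast_atTop_atTop (R := ℝ))).mul_const _
  refine squeeze_zero_norm (fun N => ?_) hinv
  rw [norm_mul, norm_inv, RCLike.norm_natCast]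
  gcongr
  exact norm_sum_Icc_pow_le hz hz1 N

section Fourier

variable {T : ℝ}

lemma fourier_sub_apply (n : ℤ) (x y : AddCircle T) :
    fourier n (x - y) = fourier n x * conj (fourier n y) := by
  rw [sub_eq_add_neg, ← fourier_neg, fourier_apply, fourier_apply, fourier_apply, smul_add,
    AddCircle.toCircle_add, Circle.coe_mul, smul_neg, ← neg_smul]

lemma fourier_natCast_apply (n : ℕ) (x : AddCircle T) : fourier n x = fourier 1 x ^ n := by
  induction n with
  | zero => exact fourier_zero
  | succ k ih => rw [Nat.cast_succ, fourier_add, ih, pow_succ]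

lemma fourier_one_apply_eq_one_iff (hT : T ≠ 0) {x : AddCircle T} : fourier 1 x = 1 ↔ x = 0 := by
  rw [← fourier_eval_zero (T := T) 1, fourier_one, fourier_one, Circle.coe_inj,
    (AddCircle.injective_toCircle hT).eq_iff]

noncomputable def fourierMean (N : ℕ) (x : AddCircle T) : ℂ :=
  (N : ℂ)⁻¹ * ∑ n ∈ Icc 1 N, fourier n x

lemma continuous_fourierMean (N : ℕ) : Continuous (fourierMean (T := T) N) :=
  continuous_const.mul (continuous_finsetSum _ fun n _ => (fourier n).continuous)

lemma norm_fourierMean_le_one (N : ℕ) (x : AddCircle T) : ‖fourierMean N x‖ ≤ 1 := by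
  rcases N.eq_zero_or_pos with rfl | hN
  · simp [fourierMean]
  calc ‖fourierMean N x‖ ≤ (N : ℝ)⁻¹ * ∑ n ∈ Icc 1 N, ‖fourier (n : ℤ) x‖ := by
        rw [fourierMean, norm_mul, norm_inv, norm_natCast]
        gcongr
        exact norm_sum_le _ _
    _ = 1 := by
        simp only [fourier_apply, Circle.norm_coe, sum_const, Nat.card_Icc, Nat.add_sub_cancel,
          nsmul_eq_mul, mul_one]
        exact inv_mul_cancel₀ (by exact_mod_cast hN.ne')

lemma tendsto_fourierMean (hT : T ≠ 0) (x : AddCircle T) :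
    Tendsto (fun N => fourierMean N x) atTop (𝓝 (({0} : Set (AddCircle T)).indicator 1 x)) := by
  by_cases hx : x = 0
  · subst hx
    rw [Set.indicator_of_mem (Set.mem_singleton 0)]
    refine tendsto_const_nhds.congr' ?_
    filter_upwards [eventually_ne_atTop 0] with N hN
    simp only [fourierMean, fourier_eval_zero, sum_const, Nat.card_Icc, Nat.add_sub_cancel,
      nsmul_eq_mul, mul_one]
    exact (inv_mul_cancel₀ (by exact_mod_cast hN)).symm
  · rw [Set.indicator_of_notMem (Set.notMem_singleton_iff.mpr hx)]
    simp only [fourierMean, fourier_natCast_apply]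
    exact tendsto_average_pow_zero (by rw [fourier_one, Circle.norm_coe])
      (mt (fourier_one_apply_eq_one_iff hT).mp hx)

end Fourier

namespace MeasureTheory.Measure

variable {α : Type*} [MeasurableSpace α] [MeasurableEq α]

lemma prod_apply_diagonal (μ : Measure α) [SigmaFinite μ] :
    μ.prod μ (Set.diagonal α) = ∑' x, μ {x} ^ 2 := by
  set A := {x | 0 < μ {x}}
  have hA : A.Countable := by
    simpa only [id, Set.ofPred_eq_eq_singleton] using
      countable_meas_level_set_pos (μ := μ) (g := id) measurable_id
  have hsupp : (fun x => μ {x}).support ⊆ A := fun x hx => pos_iff_ne_zero.mpr hx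
  calc μ.prod μ (Set.diagonal α) = ∫⁻ x, μ {x} ∂μ := by
        rw [prod_apply measurableSet_diagonal]
        congr with x
        congr 1
        ext y
        exact eq_comm
    _ = ∫⁻ x in A, μ {x} ∂μ := (setLIntegral_eq_of_support_subset hsupp).symm
    _ = ∑' x : A, μ {(x : α)} * μ {(x : α)} := lintegral_countable _ hA
    _ = ∑' x, μ {x} ^ 2 := by
        simp_rw [← sq]
        exact tsum_subtype_eq_of_support_subset (f := fun x => μ {x} ^ 2)
          fun x hx => hsupp (by simpa using hx)

lemma real_prod_diagonal (μ : Measure α) [IsFiniteMeasure μ] :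
    (μ.prod μ).real (Set.diagonal α) = ∑' x, μ.real {x} ^ 2 := by
  rw [measureReal_def, prod_apply_diagonal, ENNReal.tsum_toReal_eq fun x => by finiteness]
  simp only [ENNReal.toReal_pow, measureReal_def]

end MeasureTheory.Measure

section FourierCoefficients

variable {T : ℝ} (σ : Measure (AddCircle T)) [IsFiniteMeasure σ]

lemma integral_fourier_sub_prod (n : ℤ) :
    ∫ p, fourier n (p.1 - p.2) ∂σ.prod σ = ((‖∫ x, fourier n x ∂σ‖ ^ 2 : ℝ) : ℂ) := by
  simp_rw [fourier_sub_apply]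
  rw [integral_prod_mul (fun x => fourier n x) (fun y => conj (fourier n y)), integral_conj,
    mul_conj, normSq_eq_norm_sq]

lemma integral_fourierMean_sub (N : ℕ) :
    ∫ p, fourierMean N (p.1 - p.2) ∂σ.prod σ =
      (((1 / N : ℝ) * ∑ n ∈ Icc 1 N, ‖∫ x, fourier n x ∂σ‖ ^ 2 : ℝ) : ℂ) := by
  have hint (n : ℤ) : Integrable (fun p : AddCircle T × AddCircle T => fourier n (p.1 - p.2))
      (σ.prod σ) :=
    .of_bound ((fourier n).continuous.comp (continuous_fst.sub continuous_snd)).aestronglyMeasurable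
      1 (.of_forall fun p => (by rw [fourier_apply, Circle.norm_coe]))
  simp only [fourierMean]
  rw [integral_const_mul, integral_finsetSum _ fun (n : ℕ) _ => hint n]
  simp_rw [integral_fourier_sub_prod]
  push_cast
  ring

lemma tendsto_integral_fourierMean_sub (hT : T ≠ 0) :
    Tendsto (fun N => ∫ p, fourierMean N (p.1 - p.2) ∂σ.prod σ) atTop
      (𝓝 ((σ.prod σ).real (Set.diagonal (AddCircle T)))) := by
  have hlim (p : AddCircle T × AddCircle T) : Tendsto (fun N => fourierMean N (p.1 - p.2)) atTop
      (𝓝 ((Set.diagonal (AddCircle T)).indicator (fun _ => 1) p)) := by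
    have hdiag : (Set.diagonal (AddCircle T)).indicator (fun _ => (1 : ℂ)) p =
        ({0} : Set (AddCircle T)).indicator 1 (p.1 - p.2) := by
      simp only [Set.indicator_apply, Set.mem_diagonal_iff, Set.mem_singleton_iff, sub_eq_zero,
        Pi.one_apply]
    rw [hdiag]
    exact tendsto_fourierMean hT (p.1 - p.2)
  have h := tendsto_integral_of_dominated_convergence (F := fun N p => fourierMean N (p.1 - p.2))
    (μ := σ.prod σ) (fun _ => (1 : ℝ))
    (fun N => ((continuous_fourierMean N).comp
      (continuous_fst.sub continuous_snd)).aestronglyMeasurable)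
    (integrable_const _) (fun N => .of_forall fun p => norm_fourierMean_le_one N _)
    (.of_forall hlim)
  rwa [integral_indicator_const _ measurableSet_diagonal, real_smul, mul_one] at h

end FourierCoefficients

theorem stmt10_general (σ : Measure (AddCircle (1 : ℝ))) [IsFiniteMeasure σ]
    (c : ℤ → ℂ) (hc : ∀ n : ℤ, c n = ∫ x, fourier n x ∂σ) :
    Tendsto (fun N : ℕ =>
        (1 / (N : ℝ)) * ∑ n ∈ Finset.Icc (1 : ℕ) N, ‖c n‖ ^ 2)
      atTop (nhds (∑' t : AddCircle (1 : ℝ), (σ {t}).toReal ^ 2)) ∧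
    ((∀ t : AddCircle (1 : ℝ), σ {t} = 0) ↔
      Tendsto (fun N : ℕ =>
          (1 / (N : ℝ)) * ∑ n ∈ Finset.Icc (1 : ℕ) N, ‖c n‖ ^ 2)
        atTop (nhds 0)) := by
  have hatoms : ∑' t, (σ {t}).toReal ^ 2 = (σ.prod σ).real (Set.diagonal _) :=
    σ.real_prod_diagonal.symm
  have hlim : Tendsto (fun N : ℕ => (1 / (N : ℝ)) * ∑ n ∈ Icc (1 : ℕ) N, ‖c n‖ ^ 2) atTop
      (𝓝 (∑' t, (σ {t}).toReal ^ 2)) := by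
    rw [hatoms, ← tendsto_ofReal_iff]
    simp_rw [hc, ← integral_fourierMean_sub]
    exact tendsto_integral_fourierMean_sub σ one_ne_zero
  have hno_atoms : (∀ t, σ {t} = 0) ↔ ∑' t, (σ {t}).toReal ^ 2 = 0 := by
    rw [hatoms, measureReal_eq_zero_iff, σ.prod_apply_diagonal, ENNReal.tsum_eq_zero]
    simp
  exact ⟨hlim, hno_atoms.trans ⟨fun h => h ▸ hlim, tendsto_nhds_unique hlim⟩⟩

theorem stmt10 [Fact ((0 : ℝ) < 1)] (σ : Measure (AddCircle (1 : ℝ))) [IsFiniteMeasure σ]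
    (c : ℤ → ℂ) (hc : ∀ n : ℤ, c n = ∫ x, fourier n x ∂σ) :
    Tendsto (fun N : ℕ =>
        (1 / (N : ℝ)) * ∑ n ∈ Finset.Icc (1 : ℕ) N, ‖c n‖ ^ 2)
      atTop (nhds (∑' t : AddCircle (1 : ℝ), (σ {t}).toReal ^ 2)) ∧
    ((∀ t : AddCircle (1 : ℝ), σ {t} = 0) ↔
      Tendsto (fun N : ℕ =>
          (1 / (N : ℝ)) * ∑ n ∈ Finset.Icc (1 : ℕ) N, ‖c n‖ ^ 2)
        atTop (nhds 0)) :=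
  stmt10_general σ c hc
end

section
/- Let s be an irrational real number and let (J_l)_{l∈ℕ} be a sequence of pairwise disjoint intervals of natural numbers with lengths |J_l| → ∞ whose union has full natural density, and let (d_l) be complex numbers with |d_l| ≤ 1. Define C'(n) = Σ_l 𝟙_{J_l}(n) · d_l. Then lim_{N→∞} (1/N) Σ_{n=1}^{N} e(ns) · C'(n) = 0. -/
/-!
Put `z = e(s)`; as `s` is irrational, `z ≠ 1` and `‖z‖ = 1`, so every sum of `z ^ n` over an
interval is at most `2 / ‖1 - z‖`. Since `C'` is `d l` on the `l`-th block and `0` off the blocks,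
the sum up to `N` is a sum of one such geometric sum per block meeting `[1, N]`. Only `o(N)` blocks
meet `[1, N]`: all but finitely many have length at least `M`, by disjointness at most `(N + 1) / M`
of those lie inside `[0, N]`, and at most one contains `N`.
-/

open Finset Filter Complex
open scoped Classical

lemma norm_geom_sum_Ico_le {𝕜 : Type*} [NormedField 𝕜] {z : 𝕜} (hz : ‖z‖ ≤ 1) (hz1 : z ≠ 1)
    (p q : ℕ) : ‖∑ n ∈ Ico p q, z ^ n‖ ≤ 2 / ‖1 - z‖ := by
  rcases le_or_gt p q with hpq | hqp
  · rw [geom_sum_Ico hz1 hpq, norm_div, norm_sub_rev z 1]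
    gcongr
    calc ‖z ^ q - z ^ p‖ ≤ ‖z ^ q‖ + ‖z ^ p‖ := norm_sub_le _ _
      _ ≤ 1 + 1 := by
        rw [norm_pow, norm_pow]
        gcongr <;> exact pow_le_one₀ (norm_nonneg z) hz
      _ = 2 := one_add_one_eq_two
  · rw [Ico_eq_empty_of_le hqp.le, sum_empty, norm_zero]
    positivity

lemma Irrational.exp_two_pi_mul_I_ne_one {s : ℝ} (hs : Irrational s) :
    exp (2 * Real.pi * I * s) ≠ 1 := by
  rw [Ne, exp_eq_one_iff]
  rintro ⟨n, hn⟩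
  have h2pi : 2 * (Real.pi : ℂ) * I ≠ 0 := by simp [Real.pi_ne_zero]
  have : (s : ℂ) = n := mul_left_cancel₀ h2pi (by rw [hn]; ring)
  exact hs.ne_int n (by exact_mod_cast this)

section Blocks

open Function

variable (a L : ℕ → ℕ)

def block (l : ℕ) : Set ℕ := Set.Ico (a l) (a l + L l)

noncomputable def blockIndex (n : ℕ) : ℕ :=
  if h : ∃ l, n ∈ block a L l then h.choose else 0

noncomputable def blocksMeeting (S : Finset ℕ) : Finset ℕ :=
  {n ∈ S | ∃ l, n ∈ block a L l}.image (blockIndex a L)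

variable {a L}

@[simp]
lemma mem_block {l n : ℕ} : n ∈ block a L l ↔ a l ≤ n ∧ n < a l + L l := Iff.rfl

lemma mem_block_blockIndex {n : ℕ} (h : ∃ l, n ∈ block a L l) :
    n ∈ block a L (blockIndex a L n) := by
  rw [blockIndex, dif_pos h]
  exact h.choose_spec

lemma blockIndex_eq (hdisj : Pairwise (Disjoint on block a L)) {l n : ℕ}
    (hn : n ∈ block a L l) : blockIndex a L n = l := by
  by_contra hne
  exact Set.disjoint_left.mp (hdisj hne) (mem_block_blockIndex ⟨l, hn⟩) hn

lemma mem_blocksMeeting (hdisj : Pairwise (Disjoint on block a L)) {S : Finset ℕ} {l : ℕ} :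
    l ∈ blocksMeeting a L S ↔ ∃ n ∈ S, n ∈ block a L l := by
  simp only [blocksMeeting, mem_image, mem_filter]
  constructor
  · rintro ⟨n, ⟨hnS, hn⟩, rfl⟩
    exact ⟨n, hnS, mem_block_blockIndex hn⟩
  · rintro ⟨n, hnS, hn⟩
    exact ⟨n, ⟨hnS, l, hn⟩, blockIndex_eq hdisj hn⟩

lemma sum_length_le (hdisj : Pairwise (Disjoint on block a L)) {T : Finset ℕ} {q : ℕ}
    (hT : ∀ l ∈ T, a l + L l ≤ q) : ∑ l ∈ T, L l ≤ q := by
  have hdisj' : (T : Set ℕ).PairwiseDisjoint fun l => Ico (a l) (a l + L l) :=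
    fun l _ l' _ hne => by
      rw [Function.onFun, ← disjoint_coe, coe_Ico, coe_Ico]; exact hdisj hne
  calc ∑ l ∈ T, L l = #(T.biUnion fun l => Ico (a l) (a l + L l)) := by
        rw [card_biUnion hdisj']; simp
    _ ≤ #(range q) := card_le_card fun n hn => by
        obtain ⟨l, hl, hn⟩ := mem_biUnion.mp hn
        have := hT l hl
        simp only [mem_Ico] at hn
        exact mem_range.mpr (by omega)
    _ = q := card_range q

lemma card_blocksMeeting_Ico_le (hdisj : Pairwise (Disjoint on block a L)) {l₀ M : ℕ}
    (hM : ∀ l, l₀ ≤ l → M ≤ L l) (p q : ℕ) :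
    M * #(blocksMeeting a L (Ico p q)) ≤ M * (l₀ + 1) + q := by
  set T := blocksMeeting a L (Ico p q)
  have hstraddle : #{l ∈ T | ¬ a l + L l ≤ q} ≤ 1 := by
    have hlast : ∀ l ∈ {l ∈ T | ¬ a l + L l ≤ q}, q - 1 ∈ block a L l := by
      intro l hl
      obtain ⟨hlT, hlq⟩ := mem_filter.mp hl
      obtain ⟨n, hn, hnl⟩ := (mem_blocksMeeting hdisj).mp hlT
      simp only [mem_Ico, mem_block] at hn hnl ⊢
      omega
    refine card_le_one.mpr fun l hl l' hl' => by_contra fun hne => ?_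
    exact Set.disjoint_left.mp (hdisj hne) (hlast l hl) (hlast l' hl')
  have hearly : #{l ∈ T | a l + L l ≤ q ∧ l < l₀} ≤ l₀ :=
    (card_le_card fun l hl => mem_range.mpr (mem_filter.mp hl).2.2).trans (card_range l₀).le
  have hlong : M * #{l ∈ T | a l + L l ≤ q ∧ ¬ l < l₀} ≤ q := by
    rw [mul_comm, ← smul_eq_mul]
    refine (card_nsmul_le_sum _ _ _ fun l hl => hM l ?_).trans (sum_length_le hdisj ?_)
    · exact not_lt.mp (mem_filter.mp hl).2.2
    · exact fun l hl => (mem_filter.mp hl).2.1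
  have hsplit := card_filter_add_card_filter_not (s := T) (fun l => a l + L l ≤ q)
  have hsplit' := card_filter_add_card_filter_not (s := {l ∈ T | a l + L l ≤ q}) (· < l₀)
  simp only [filter_filter] at hsplit'
  calc M * #T = M * #{l ∈ T | a l + L l ≤ q ∧ l < l₀}
        + M * #{l ∈ T | a l + L l ≤ q ∧ ¬ l < l₀} + M * #{l ∈ T | ¬ a l + L l ≤ q} := by
          rw [← hsplit, ← hsplit']; ring
    _ ≤ M * l₀ + q + M * 1 := by gcongr
    _ = M * (l₀ + 1) + q := by ring

lemma sum_mul_eq_sum_blocksMeeting {R : Type*} [NonUnitalNonAssocSemiring R] {c d : ℕ → R}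
    (hdisj : Pairwise (Disjoint on block a L)) (hc : ∀ l, ∀ n ∈ block a L l, c n = d l)
    (hc0 : ∀ n, (∀ l, n ∉ block a L l) → c n = 0) (g : ℕ → R) (S : Finset ℕ) :
    ∑ n ∈ S, g n * c n =
      ∑ l ∈ blocksMeeting a L S, (∑ n ∈ S with n ∈ block a L l, g n) * d l := by
  have hsupp : ∀ n ∈ S, g n * c n ≠ 0 → ∃ l, n ∈ block a L l := fun n _ hn =>
    by_contra fun h => hn (by rw [hc0 n (not_exists.mp h), mul_zero])
  rw [← sum_filter_of_ne hsupp,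
    ← sum_fiberwise_of_maps_to fun n hn => mem_image_of_mem (blockIndex a L) hn]
  refine sum_congr rfl fun l _ => ?_
  rw [sum_mul, filter_filter]
  refine sum_congr (filter_congr fun n _ => ?_) fun n hn => by rw [hc l n (mem_filter.mp hn).2]
  exact ⟨fun h => h.2 ▸ mem_block_blockIndex h.1, fun h => ⟨⟨l, h⟩, blockIndex_eq hdisj h⟩⟩

variable {R : Type*} [SeminormedRing R] {c d g : ℕ → R}

lemma norm_sum_Ico_mul_le (hdisj : Pairwise (Disjoint on block a L))
    (hc : ∀ l, ∀ n ∈ block a L l, c n = d l) (hc0 : ∀ n, (∀ l, n ∉ block a L l) → c n = 0)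
    (hd : ∀ l, ‖d l‖ ≤ 1) {B : ℝ} (hg : ∀ p q, ‖∑ n ∈ Ico p q, g n‖ ≤ B)
    (p q : ℕ) :
    ‖∑ n ∈ Ico p q, g n * c n‖ ≤ B * #(blocksMeeting a L (Ico p q)) := by
  rw [sum_mul_eq_sum_blocksMeeting hdisj hc hc0, mul_comm, ← nsmul_eq_mul]
  refine (norm_sum_le _ _).trans (sum_le_card_nsmul _ _ _ fun l _ => ?_)
  have hinter : {n ∈ Ico p q | n ∈ block a L l} = Ico (max p (a l)) (min q (a l + L l)) := by
    ext n; simp only [mem_filter, mem_Ico, mem_block, max_le_iff, lt_min_iff]; omega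
  calc ‖(∑ n ∈ Ico p q with n ∈ block a L l, g n) * d l‖
      ≤ ‖∑ n ∈ Ico p q with n ∈ block a L l, g n‖ * ‖d l‖ := norm_mul_le _ _
    _ ≤ B * 1 := by
      rw [hinter]
      exact mul_le_mul (hg _ _) (hd l) (norm_nonneg _) ((norm_nonneg _).trans (hg 0 0))
    _ = B := mul_one B

lemma isLittleO_card_blocksMeeting (hL : Tendsto L atTop atTop)
    (hdisj : Pairwise (Disjoint on block a L)) (p : ℕ) :
    (fun N => (#(blocksMeeting a L (Icc p N)) : ℝ)) =o[atTop] (fun N => (N : ℝ)) := by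
  refine Asymptotics.isLittleO_iff.mpr fun ε hε => ?_
  obtain ⟨M, hM⟩ := exists_nat_gt (4 / ε)
  obtain ⟨l₀, hl₀⟩ := eventually_atTop.mp (hL.eventually_ge_atTop M)
  filter_upwards [eventually_ge_atTop 1,
    tendsto_natCast_atTop_atTop.eventually_ge_atTop (2 * (l₀ + 1) / ε)] with N hN1 hNl₀
  have hcount : (M : ℝ) * #(blocksMeeting a L (Icc p N)) ≤ M * (l₀ + 1) + (N + 1) := by
    rw [← Ico_add_one_right_eq_Icc]
    exact_mod_cast card_blocksMeeting_Ico_le hdisj hl₀ p (N + 1)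
  have hMε : 4 < M * ε := (div_lt_iff₀ hε).mp hM
  have hMpos : (0 : ℝ) < M := pos_of_mul_pos_left (by linarith) hε.le
  have hl₀N : (l₀ + 1 : ℝ) ≤ ε * N / 2 := by
    rw [div_le_iff₀ hε] at hNl₀; linarith
  have hN : (N + 1 : ℝ) ≤ M * (ε * N / 2) := by
    have : (1 : ℝ) ≤ N := by exact_mod_cast hN1
    nlinarith
  rw [Real.norm_natCast, Real.norm_natCast]
  refine le_of_mul_le_mul_left ?_ hMpos
  calc (M : ℝ) * #(blocksMeeting a L (Icc p N)) ≤ M * (l₀ + 1) + (N + 1) := hcount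
    _ ≤ M * (ε * N / 2) + M * (ε * N / 2) := by gcongr
    _ = M * (ε * N) := by ring

lemma isLittleO_sum_Icc_mul (hL : Tendsto L atTop atTop)
    (hdisj : Pairwise (Disjoint on block a L))
    (hc : ∀ l, ∀ n ∈ block a L l, c n = d l) (hc0 : ∀ n, (∀ l, n ∉ block a L l) → c n = 0)
    (hd : ∀ l, ‖d l‖ ≤ 1) {B : ℝ} (hg : ∀ p q, ‖∑ n ∈ Ico p q, g n‖ ≤ B)
    (p : ℕ) :
    (fun N => ∑ n ∈ Icc p N, g n * c n) =o[atTop] (fun N => (N : ℝ)) := by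
  refine Asymptotics.IsBigO.trans_isLittleO ?_ (isLittleO_card_blocksMeeting hL hdisj p)
  refine Asymptotics.IsBigO.of_bound B (Eventually.of_forall fun N => ?_)
  rw [Real.norm_natCast, ← Ico_add_one_right_eq_Icc]
  exact norm_sum_Ico_mul_le hdisj hc hc0 hd hg p (N + 1)

end Blocks

theorem stmt11_general (s : ℝ) (hs : Irrational s)
    (a L : ℕ → ℕ) (hL : Tendsto L atTop atTop)
    (hdisj : Pairwise fun l l' => Disjoint (Set.Ico (a l) (a l + L l)) (Set.Ico (a l') (a l' + L l')))
    (d : ℕ → ℂ) (hd : ∀ l, ‖d l‖ ≤ 1)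
    (C' : ℕ → ℂ)
    (hC'1 : ∀ l, ∀ n ∈ Set.Ico (a l) (a l + L l), C' n = d l)
    (hC'0 : ∀ n, (∀ l, n ∉ Set.Ico (a l) (a l + L l)) → C' n = 0) :
    Tendsto (fun N : ℕ =>
        (1 / (N : ℂ)) * ∑ n ∈ Finset.Icc 1 N,
          Complex.exp (2 * Real.pi * Complex.I * (n * s)) * C' n)
      atTop (nhds 0) := by
  have hz : ‖Complex.exp (2 * Real.pi * Complex.I * s)‖ = 1 := by
    rw [show 2 * Real.pi * Complex.I * s = ((2 * Real.pi * s : ℝ) : ℂ) * Complex.I by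
      push_cast; ring]
    exact norm_exp_ofReal_mul_I _
  have hpow (n : ℕ) : Complex.exp (2 * Real.pi * Complex.I * (n * s)) =
      Complex.exp (2 * Real.pi * Complex.I * s) ^ n := by
    rw [← exp_nat_mul]; ring_nf
  have hsum := isLittleO_sum_Icc_mul hL hdisj hC'1 hC'0 hd
    (norm_geom_sum_Ico_le hz.le hs.exp_two_pi_mul_I_ne_one) 1
  simp_rw [hpow, one_div_mul_eq_div]
  refine Asymptotics.IsLittleO.tendsto_div_nhds_zero (Asymptotics.isLittleO_norm_right.mp ?_)
  simpa only [Complex.norm_natCast] using hsum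

theorem stmt11 (s : ℝ) (hs : Irrational s)
    (a L : ℕ → ℕ) (hL : Tendsto L atTop atTop)
    (hdisj : Pairwise fun l l' => Disjoint (Set.Ico (a l) (a l + L l)) (Set.Ico (a l') (a l' + L l')))
    (hdens : Tendsto (fun N : ℕ =>
        (((Finset.range N).filter fun n => ∃ l, n ∈ Set.Ico (a l) (a l + L l)).card : ℝ) / N)
      atTop (nhds 1))
    (d : ℕ → ℂ) (hd : ∀ l, ‖d l‖ ≤ 1)
    (C' : ℕ → ℂ)
    (hC'1 : ∀ l, ∀ n ∈ Set.Ico (a l) (a l + L l), C' n = d l)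
    (hC'0 : ∀ n, (∀ l, n ∉ Set.Ico (a l) (a l + L l)) → C' n = 0) :
    Tendsto (fun N : ℕ =>
        (1 / (N : ℂ)) * ∑ n ∈ Finset.Icc 1 N,
          Complex.exp (2 * Real.pi * Complex.I * (n * s)) * C' n)
      atTop (nhds 0) :=
  stmt11_general s hs a L hL hdisj d hd C' hC'1 hC'0
end
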